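/- arXiv:1701.06175 — 2 statements merged into one kernel-verified Lean document; each statement's English description precedes it below -/
import Mathlib

section
/- Let n ≥ 2 and let f : B^n → ℝ^n be a continuous open map with f(0) = 0. Suppose there is a function R : [0,1) → (0,∞) such that m(f(B(0,r))) ≥ Ω_n · R(r)^n for every r ∈ (0,1). Then limsup_{x→0} |f(x)| / R(|x|) ≥ 1. -/
open MeasureTheory Metric Filter Topology Module

/-- Let `n ≥ 2` and let `f : 𝔹ⁿ → ℝⁿ` be a continuous open map with
`f 0 = 0`.  Suppose there is a function `R : [0,1) → (0,∞)` such that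
`m(f(B(0,r))) ≥ Ω_n · R(r)^n` for every `r ∈ (0,1)`.  Then
`limsup_{x → 0} ‖f x‖ / R ‖x‖ ≥ 1`. -/
theorem stmt0 (n : ℕ) (hn : 2 ≤ n)
    (f : EuclideanSpace ℝ (Fin n) → EuclideanSpace ℝ (Fin n))
    (hf : ContinuousOn f (ball 0 1))
    (hopen : ∀ U : Set (EuclideanSpace ℝ (Fin n)),
      IsOpen U → U ⊆ ball 0 1 → IsOpen (f '' U))
    (hf0 : f 0 = 0)
    (R : ℝ → ℝ) (hR : ∀ r ∈ Set.Ico (0:ℝ) 1, 0 < R r)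
    (hvol : ∀ r ∈ Set.Ioo (0:ℝ) 1,
      volume (ball (0 : EuclideanSpace ℝ (Fin n)) 1) * ENNReal.ofReal (R r ^ n)
        ≤ volume (f '' ball 0 r)) :
    1 ≤ Filter.limsup (fun x => ENNReal.ofReal (‖f x‖ / R ‖x‖))
        (𝓝[≠] (0 : EuclideanSpace ℝ (Fin n))) := by
  by_contra hcon
  push_neg at hcon
  have hev : ∀ᶠ x in 𝓝[≠] (0 : EuclideanSpace ℝ (Fin n)),
      ENNReal.ofReal (‖f x‖ / R ‖x‖) < 1 := eventually_lt_of_limsup_lt hcon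
  rw [eventually_nhdsWithin_iff, Metric.eventually_nhds_iff] at hev
  obtain ⟨δ, hδ, hball⟩ := hev
  -- choose s ∈ (0, 1), s < δ
  set s : ℝ := min (δ / 2) (1 / 2) with hs_def
  have hs0 : 0 < s := lt_min (by linarith) (by norm_num)
  have hs1 : s < 1 := lt_of_le_of_lt (min_le_right _ _) (by norm_num)
  have hsδ : s < δ := lt_of_le_of_lt (min_le_left _ _) (by linarith)
  -- max of ‖f‖ on closedBall 0 s
  have hsub : closedBall (0 : EuclideanSpace ℝ (Fin n)) s ⊆ ball 0 1 := by
    intro x hx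
    simp only [mem_closedBall, mem_ball] at hx ⊢
    exact lt_of_le_of_lt hx hs1
  have hcont : ContinuousOn (fun x => ‖f x‖) (closedBall (0 : EuclideanSpace ℝ (Fin n)) s) :=
    (hf.mono hsub).norm
  obtain ⟨x₀, hx₀mem, hx₀max⟩ := (isCompact_closedBall (0 : EuclideanSpace ℝ (Fin n)) s).exists_isMaxOn
    (⟨0, by simp [le_of_lt hs0]⟩) hcont
  set M : ℝ := ‖f x₀‖ with hM_def
  have hvolpos : volume (ball (0 : EuclideanSpace ℝ (Fin n)) 1) ≠ 0 :=
    (measure_ball_pos volume _ one_pos).ne'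
  have hvoltop : volume (ball (0 : EuclideanSpace ℝ (Fin n)) 1) ≠ ⊤ :=
    measure_ball_lt_top.ne
  -- key: for all t with 0 < t ≤ s, R t ≤ M
  have key : ∀ t : ℝ, 0 < t → t ≤ s → R t ≤ M := by
    intro t ht hts
    have himg : f '' ball 0 t ⊆ closedBall (0 : EuclideanSpace ℝ (Fin n)) M := by
      rintro _ ⟨x, hx, rfl⟩
      have hx' : x ∈ closedBall (0 : EuclideanSpace ℝ (Fin n)) s := by
        simp only [mem_ball] at hx
        simp only [mem_closedBall]
        exact le_trans hx.le hts
      simpa [mem_closedBall, dist_eq_norm] using hx₀max hx'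
    have h1 := hvol t ⟨ht, lt_of_le_of_lt hts hs1⟩
    have h2 : volume (f '' ball 0 t) ≤ volume (closedBall (0 : EuclideanSpace ℝ (Fin n)) M) :=
      measure_mono himg
    have hM0 : 0 ≤ M := norm_nonneg _
    have h3 : volume (closedBall (0 : EuclideanSpace ℝ (Fin n)) M)
        = ENNReal.ofReal (M ^ n) * volume (ball (0 : EuclideanSpace ℝ (Fin n)) 1) := by
      rw [Measure.addHaar_closedBall _ _ hM0, finrank_euclideanSpace_fin]
    have h4 : volume (ball (0 : EuclideanSpace ℝ (Fin n)) 1) * ENNReal.ofReal (R t ^ n)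
        ≤ volume (ball (0 : EuclideanSpace ℝ (Fin n)) 1) * ENNReal.ofReal (M ^ n) := by
      calc volume (ball (0 : EuclideanSpace ℝ (Fin n)) 1) * ENNReal.ofReal (R t ^ n)
          ≤ volume (f '' ball 0 t) := h1
        _ ≤ _ := h2
        _ = _ := by rw [h3, mul_comm]
    have h5 : ENNReal.ofReal (R t ^ n) ≤ ENNReal.ofReal (M ^ n) :=
      (ENNReal.mul_le_mul_iff_right hvolpos hvoltop).mp h4
    have h6 : R t ^ n ≤ M ^ n :=
      (ENNReal.ofReal_le_ofReal_iff (by positivity)).mp h5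
    exact le_of_pow_le_pow_left₀ (by omega) hM0 h6
  -- now derive contradiction
  have hRs : 0 < R s := hR s ⟨hs0.le, hs1⟩
  have hMpos : 0 < M := lt_of_lt_of_le hRs (key s hs0 le_rfl)
  have hx₀ne : x₀ ≠ 0 := by
    intro h
    rw [h, hf0] at hM_def
    simp [hM_def] at hMpos
  have hx₀norm : 0 < ‖x₀‖ := norm_pos_iff.mpr hx₀ne
  have hx₀s : ‖x₀‖ ≤ s := by simpa [mem_closedBall, dist_eq_norm] using hx₀mem
  have hRx₀ : 0 < R ‖x₀‖ := hR _ ⟨norm_nonneg _, lt_of_le_of_lt hx₀s hs1⟩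
  have hlt : ENNReal.ofReal (‖f x₀‖ / R ‖x₀‖) < 1 := by
    apply hball _ hx₀ne
    simpa [dist_eq_norm] using lt_of_le_of_lt hx₀s hsδ
  rw [show (1 : ENNReal) = ENNReal.ofReal 1 by simp] at hlt
  have : ‖f x₀‖ / R ‖x₀‖ < 1 := by
    by_contra h
    push_neg at h
    exact absurd (ENNReal.ofReal_le_ofReal h) (not_le.mpr hlt)
  have hflt : ‖f x₀‖ < R ‖x₀‖ := (div_lt_one hRx₀).mp this
  exact absurd (key ‖x₀‖ hx₀norm hx₀s) (not_le.mpr hflt)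
end

section
/- Let n ≥ 2, let f : B^n → ℝ^n be a continuous open map, and let r₀ ∈ (0,1). Then for every x with |x| < r₀ one has the strict inequality |f(x)| < max_{|z| = r₀} |f(z)|; in particular f(B(0,r₀)) ⊆ B(0, L_f(r₀)), where L_f(r₀) := max_{|z|=r₀} |f(z)|. -/
open MeasureTheory Metric Filter Topology

/-- Let `n ≥ 2`, let `f : 𝔹ⁿ → ℝⁿ` be a continuous open map, and let
`r₀ ∈ (0,1)`.  Then for every `x` with `‖x‖ < r₀` one has the strict inequality
`‖f x‖ < max_{‖z‖ = r₀} ‖f z‖`; in particular `f(B(0,r₀)) ⊆ B(0, L_f(r₀))`, where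
`L_f(r₀) := max_{‖z‖ = r₀} ‖f z‖`. -/
theorem stmt1 (n : ℕ) (hn : 2 ≤ n)
    (f : EuclideanSpace ℝ (Fin n) → EuclideanSpace ℝ (Fin n))
    (hf : ContinuousOn f (ball 0 1))
    (hopen : ∀ U : Set (EuclideanSpace ℝ (Fin n)),
      IsOpen U → U ⊆ ball 0 1 → IsOpen (f '' U))
    (r₀ : ℝ) (hr₀ : r₀ ∈ Set.Ioo (0:ℝ) 1) :
    (∀ x : EuclideanSpace ℝ (Fin n), ‖x‖ < r₀ →
        ‖f x‖ < sSup ((fun z => ‖f z‖) '' sphere (0 : EuclideanSpace ℝ (Fin n)) r₀)) ∧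
      f '' ball 0 r₀ ⊆
        ball (0 : EuclideanSpace ℝ (Fin n))
          (sSup ((fun z => ‖f z‖) '' sphere (0 : EuclideanSpace ℝ (Fin n)) r₀)) := by
  obtain ⟨hr0, hr1⟩ := hr₀
  haveI : NeZero n := ⟨by omega⟩
  -- key openness consequence: interior points are not local maxima of ‖f‖
  have key : ∀ x : EuclideanSpace ℝ (Fin n), ‖x‖ < r₀ →
      ∃ y : EuclideanSpace ℝ (Fin n), ‖y‖ < r₀ ∧ ‖f x‖ < ‖f y‖ := by
    intro x hx
    have hUsub : ball (0 : EuclideanSpace ℝ (Fin n)) r₀ ⊆ ball 0 1 :=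
      ball_subset_ball hr1.le
    have hU : IsOpen (f '' ball (0 : EuclideanSpace ℝ (Fin n)) r₀) :=
      hopen _ isOpen_ball hUsub
    have hxmem : x ∈ ball (0 : EuclideanSpace ℝ (Fin n)) r₀ := mem_ball_zero_iff.2 hx
    have hfx : f x ∈ f '' ball (0 : EuclideanSpace ℝ (Fin n)) r₀ := ⟨x, hxmem, rfl⟩
    obtain ⟨ε, hε, hball⟩ := Metric.isOpen_iff.1 hU (f x) hfx
    by_cases h0 : f x = 0
    · -- take any point of norm ε/2
      set p : EuclideanSpace ℝ (Fin n) := (ε/2) • EuclideanSpace.single (0 : Fin n) (1:ℝ)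
      have hnp : ‖p‖ = ε/2 := by
        rw [norm_smul, EuclideanSpace.norm_single]
        simp [Real.norm_eq_abs]
        exact hε.le
      have hp : p ∈ ball (f x) ε := by
        rw [mem_ball, h0, dist_zero_right, hnp]; linarith
      obtain ⟨y, hy, hyp⟩ := hball hp
      exact ⟨y, mem_ball_zero_iff.1 hy, by
        rw [h0, norm_zero, hyp, hnp]; linarith⟩
    · have hnfx : (0:ℝ) < ‖f x‖ := norm_pos_iff.2 h0
      set c : ℝ := 1 + ε / (2 * ‖f x‖)
      set p : EuclideanSpace ℝ (Fin n) := c • f x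
      have hc1 : (1:ℝ) < c := by
        have : 0 < ε / (2 * ‖f x‖) := div_pos hε (by linarith)
        simp only [c]; linarith
      have hnp : ‖p‖ = c * ‖f x‖ := by
        rw [norm_smul, Real.norm_eq_abs, abs_of_pos (by linarith)]
      have hdist : dist p (f x) = ε/2 := by
        have : p - f x = (ε / (2 * ‖f x‖)) • f x := by
          simp only [p, c]; rw [add_smul, one_smul]; abel
        rw [dist_eq_norm, this, norm_smul, Real.norm_eq_abs,
          abs_of_pos (div_pos hε (by linarith))]
        field_simp
      have hp : p ∈ ball (f x) ε := by rw [mem_ball, hdist]; linarith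
      obtain ⟨y, hy, hyp⟩ := hball hp
      refine ⟨y, mem_ball_zero_iff.1 hy, ?_⟩
      rw [hyp, hnp]
      nlinarith
  -- max over closed ball
  have hKsub : closedBall (0 : EuclideanSpace ℝ (Fin n)) r₀ ⊆ ball 0 1 :=
    closedBall_subset_ball hr1
  have hKc : IsCompact (closedBall (0 : EuclideanSpace ℝ (Fin n)) r₀) :=
    isCompact_closedBall _ _
  have hcont : ContinuousOn (fun z => ‖f z‖) (closedBall (0 : EuclideanSpace ℝ (Fin n)) r₀) :=
    (hf.mono hKsub).norm
  obtain ⟨x₀, hx₀K, hx₀max⟩ := hKc.exists_isMaxOn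
    (⟨0, mem_closedBall_self hr0.le⟩) hcont
  set M : ℝ := ‖f x₀‖ with hM
  have hmaxle : ∀ z ∈ closedBall (0 : EuclideanSpace ℝ (Fin n)) r₀, ‖f z‖ ≤ M :=
    fun z hz => hx₀max hz
  -- x₀ is on the sphere
  have hx₀sph : ‖x₀‖ = r₀ := by
    by_contra h
    have hlt : ‖x₀‖ < r₀ :=
      lt_of_le_of_ne (mem_closedBall_zero_iff.1 hx₀K) h
    obtain ⟨y, hy, hfy⟩ := key x₀ hlt
    exact absurd (hmaxle y (mem_closedBall_zero_iff.2 hy.le)) (not_le.2 hfy)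
  -- sSup over sphere equals M
  have hsup : sSup ((fun z => ‖f z‖) '' sphere (0 : EuclideanSpace ℝ (Fin n)) r₀) = M := by
    apply IsGreatest.csSup_eq
    constructor
    · exact ⟨x₀, mem_sphere_zero_iff_norm.2 hx₀sph, rfl⟩
    · rintro m ⟨z, hz, rfl⟩
      exact hmaxle z (mem_closedBall_zero_iff.2 (mem_sphere_zero_iff_norm.1 hz).le)
  have main : ∀ x : EuclideanSpace ℝ (Fin n), ‖x‖ < r₀ →
      ‖f x‖ < sSup ((fun z => ‖f z‖) '' sphere (0 : EuclideanSpace ℝ (Fin n)) r₀) := by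
    intro x hx
    rw [hsup]
    rcases lt_or_eq_of_le (hmaxle x (mem_closedBall_zero_iff.2 hx.le)) with h | h
    · exact h
    · exfalso
      obtain ⟨y, hy, hfy⟩ := key x hx
      rw [h] at hfy
      exact absurd (hmaxle y (mem_closedBall_zero_iff.2 hy.le)) (not_le.2 hfy)
  refine ⟨main, ?_⟩
  rintro p ⟨x, hx, rfl⟩
  rw [mem_ball, dist_zero_right]
  exact main x (mem_ball_zero_iff.1 hx)
end
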